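/- arXiv:2411.19765 — 4 statements merged into one kernel-verified Lean document; each statement's English description precedes it below -/
import Mathlib

section
/- Let f(x) = ∑_{i=1}^a |x + ω_i| + ∑_{j=1}^b |x + ν_j| where a, b are positive integers with b ≥ a + 1, and ω_i, ν_j are real numbers. Let c = ⌈(b − a)/2⌉ and let x* be any minimizer of f over ℝ. Then |x*| ≤ max{ |h_c(ν)| , |h_c(−ν)| }, where h_c(v) denotes the c-th largest entry of the vector v = (ν_1, …, ν_b); in particular the bound depends only on the ν_j's and not on the ω_i's. -/
open BigOperators

/-- `kthLargest v c` is the `c`-th largest entry of the vector `v` (1-indexed). -/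
noncomputable def kthLargest {b : ℕ} (v : Fin b → ℝ) (c : ℕ) : ℝ :=
  ((List.ofFn v).mergeSort (fun x y => decide (y ≤ x))).getD (c - 1) 0

private lemma sum_map_add_const (L : List ℝ) (f : ℝ → ℝ) (e : ℝ) :
    (L.map (fun t => f t + e)).sum = (L.map f).sum + L.length * e := by
  induction L with
  | nil => simp
  | cons h t ih => simp only [List.map_cons, List.sum_cons, ih, List.length_cons]; push_cast; ring

private lemma sum_map_sub_const (L : List ℝ) (f : ℝ → ℝ) (e : ℝ) :
    (L.map (fun t => f t - e)).sum = (L.map f).sum - L.length * e := by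
  induction L with
  | nil => simp
  | cons h t ih => simp only [List.map_cons, List.sum_cons, ih, List.length_cons]; push_cast; ring

private lemma key_bound {a b : ℕ} (ha : 0 < a) (hb : b ≥ a + 1)
    (ω : Fin a → ℝ) (ν : Fin b → ℝ) (xstar : ℝ)
    (hmin : ∀ x : ℝ, (∑ i, |xstar + ω i| + ∑ j, |xstar + ν j|)
                    ≤ (∑ i, |x + ω i| + ∑ j, |x + ν j|)) :
    xstar ≤ kthLargest (fun j => -ν j) ((b - a + 1) / 2) := by
  set c := (b - a + 1) / 2 with hc
  have hc1 : 1 ≤ c := by omega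
  have hcb : c ≤ b := by omega
  have h2c : 2 * c + a ≤ b + 1 := by omega
  set w : Fin b → ℝ := fun j => -ν j with hw
  set l := (List.ofFn w).mergeSort (fun x y => decide (y ≤ x)) with hl
  have hlen : l.length = b := by
    rw [hl, List.length_mergeSort, List.length_ofFn]
  have hperm : List.Perm l (List.ofFn w) := List.mergeSort_perm _ _
  have hpw : l.Pairwise (fun x y : ℝ => y ≤ x) := by
    have h := List.pairwise_mergeSort (le := fun x y : ℝ => decide (y ≤ x))
      (fun a b c h1 h2 => by
        simp only [decide_eq_true_eq] at *; linarith)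
      (fun a b => by
        simp only [Bool.or_eq_true, decide_eq_true_eq]; exact le_total b a)
      (List.ofFn w)
    rw [← hl] at h
    exact h.imp (fun hxy => by simpa using hxy)
  have hidx : c - 1 < l.length := by omega
  have hBdef : kthLargest w c = l[c - 1]'hidx := by
    rw [kthLargest, ← hl]
    exact List.getD_eq_getElem l 0 hidx
  by_contra hlt
  push_neg at hlt
  rw [hBdef] at hlt
  set B := l[c - 1]'hidx with hBd
  set d := xstar - B with hdd
  have hd : 0 < d := by simp only [hdd]; linarith
  have hmono : ∀ (i : ℕ) (hi : i < l.length), c - 1 ≤ i → l[i] ≤ B := by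
    intro i hi hci
    rcases eq_or_lt_of_le hci with h | h
    · simp [hBd, h]
    · exact List.pairwise_iff_getElem.mp hpw _ _ hidx hi h
  have hdrop : ∀ t ∈ l.drop (c - 1), t ≤ B := by
    intro t ht
    obtain ⟨k, hk, rfl⟩ := List.mem_iff_getElem.mp ht
    rw [List.getElem_drop]
    exact hmono _ _ (by omega)
  -- rewrite the ν-sums as sums over the sorted list
  have hsum : ∀ x : ℝ, ∑ j, |x + ν j| = (l.map (fun t => |x - t|)).sum := by
    intro x
    rw [(hperm.map (fun t => |x - t|)).sum_eq, List.map_ofFn, List.sum_ofFn]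
    apply Finset.sum_congr rfl
    intro j _
    simp [hw, Function.comp, sub_neg_eq_add]
  have hsplit : ∀ x : ℝ, (l.map (fun t => |x - t|)).sum =
      ((l.take (c - 1)).map (fun t => |x - t|)).sum +
      ((l.drop (c - 1)).map (fun t => |x - t|)).sum := by
    intro x
    conv_lhs => rw [← List.take_append_drop (c - 1) l]
    rw [List.map_append, List.sum_append]
  have htake_len : (l.take (c - 1)).length = c - 1 := by
    rw [List.length_take]; omega
  have hdrop_len : (l.drop (c - 1)).length = b - (c - 1) := by
    rw [List.length_drop]; omega
  -- the take-part increases by at most (c-1)*d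
  have h1 : ((l.take (c - 1)).map (fun t => |B - t|)).sum ≤
      ((l.take (c - 1)).map (fun t => |xstar - t|)).sum + ((c : ℝ) - 1) * d := by
    have hle : ((l.take (c - 1)).map (fun t => |B - t|)).sum ≤
        ((l.take (c - 1)).map (fun t => |xstar - t| + d)).sum := by
      apply List.sum_le_sum
      intro t _
      rcases abs_cases (B - t) with ⟨h, _⟩ | ⟨h, _⟩ <;> rw [h] <;>
        [linarith [le_abs_self (xstar - t)]; linarith [neg_abs_le (xstar - t)]]
    rw [sum_map_add_const, htake_len] at hle
    have hcast : ((c - 1 : ℕ) : ℝ) = (c : ℝ) - 1 := by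
      rw [Nat.cast_sub hc1, Nat.cast_one]
    rw [hcast] at hle
    exact hle
  -- the drop-part decreases by at least (b-c+1)*d
  have h2 : ((l.drop (c - 1)).map (fun t => |B - t|)).sum ≤
      ((l.drop (c - 1)).map (fun t => |xstar - t|)).sum - ((b : ℝ) - c + 1) * d := by
    have hle : ((l.drop (c - 1)).map (fun t => |B - t|)).sum ≤
        ((l.drop (c - 1)).map (fun t => |xstar - t| - d)).sum := by
      apply List.sum_le_sum
      intro t ht
      have htB : t ≤ B := hdrop t ht
      rw [abs_of_nonneg (by linarith : (0 : ℝ) ≤ B - t)]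
      have := le_abs_self (xstar - t)
      linarith
    rw [sum_map_sub_const, hdrop_len] at hle
    have hcast : ((b - (c - 1) : ℕ) : ℝ) = (b : ℝ) - c + 1 := by
      rw [Nat.cast_sub (by omega : c - 1 ≤ b), Nat.cast_sub hc1, Nat.cast_one]
      ring
    rw [hcast] at hle
    exact hle
  -- the ω part increases by at most a*d
  have h3 : ∑ i, |B + ω i| ≤ ∑ i, |xstar + ω i| + (a : ℝ) * d := by
    have hle : ∑ i, |B + ω i| ≤ ∑ i, (|xstar + ω i| + d) := by
      apply Finset.sum_le_sum
      intro i _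
      rcases abs_cases (B + ω i) with ⟨h, _⟩ | ⟨h, _⟩ <;> rw [h] <;>
        [linarith [le_abs_self (xstar + ω i)]; linarith [neg_abs_le (xstar + ω i)]]
    rwa [Finset.sum_add_distrib, Finset.sum_const, Finset.card_univ, Fintype.card_fin,
      nsmul_eq_mul] at hle
  -- combine
  have hm := hmin B
  rw [hsum B, hsum xstar, hsplit B, hsplit xstar] at hm
  have hkey : (a : ℝ) * d + ((c : ℝ) - 1) * d - ((b : ℝ) - c + 1) * d < 0 := by
    have hcast : (2 * (c : ℝ) + a) ≤ (b : ℝ) + 1 := by exact_mod_cast h2c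
    nlinarith
  linarith

/-- Robust location bound: if the `b` clean breakpoints outnumber the `a` corrupted
ones (b ≥ a + 1), any minimizer x* of f(x) = Σ|x+ω_i| + Σ|x+ν_j| satisfies
|x*| ≤ max{|h_c(ν)|, |h_c(−ν)|} with c = ⌈(b−a)/2⌉, independently of ω. -/
theorem robust_minimizer_bound
    {a b : ℕ} (ha : 0 < a) (hb : b ≥ a + 1)
    (ω : Fin a → ℝ) (ν : Fin b → ℝ)
    (xstar : ℝ)
    (hmin : ∀ x : ℝ, (∑ i, |xstar + ω i| + ∑ j, |xstar + ν j|)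
                    ≤ (∑ i, |x + ω i| + ∑ j, |x + ν j|)) :
    |xstar| ≤ max |kthLargest ν ((b - a + 1) / 2)|
                 |kthLargest (fun j => -ν j) ((b - a + 1) / 2)| := by
  have h1 := key_bound ha hb ω ν xstar hmin
  have e1 : ∀ u v : ℝ, |-u + -v| = |u + v| := fun u v => by
    rw [show -u + -v = -(u + v) by ring, abs_neg]
  have e2 : ∀ u v : ℝ, |u + -v| = |-u + v| := fun u v => by
    rw [show u + -v = -(-u + v) by ring, abs_neg]
  have h2 : -xstar ≤ kthLargest ν ((b - a + 1) / 2) := by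
    have h := key_bound ha hb (fun i => -ω i) (fun j => -ν j) (-xstar) ?_
    · simpa using h
    · intro x
      simp only [e1, e2]
      exact hmin (-x)
  rw [abs_le]
  constructor
  · have := le_abs_self (kthLargest ν ((b - a + 1) / 2))
    have := le_max_left |kthLargest ν ((b - a + 1) / 2)|
      |kthLargest (fun j => -ν j) ((b - a + 1) / 2)|
    linarith
  · have := le_abs_self (kthLargest (fun j => -ν j) ((b - a + 1) / 2))
    have := le_max_right |kthLargest ν ((b - a + 1) / 2)|
      |kthLargest (fun j => -ν j) ((b - a + 1) / 2)|
    linarith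
end

section
/- Let G ∈ ℝ^{mn×n} be the stack of matrices G_1, …, G_m ∈ ℝ^{n×n} with ∑_{i=1}^m G_i = I, and suppose W ∈ ℝ^{mn×mn} is symmetric positive definite and satisfies [I I ⋯ I]·W = P·Gᵀ for some symmetric positive definite P ∈ ℝ^{n×n} (where [I I ⋯ I] is the 1×m block row of n×n identities). Then GᵀW⁻¹G = P⁻¹ and the weighted least squares solution x_ls = (GᵀW⁻¹G)⁻¹GᵀW⁻¹ζ equals [I I ⋯ I]·ζ = ∑_{i=1}^m ζ_i, where ζ ∈ ℝ^{mn} stacks ζ_1, …, ζ_m ∈ ℝ^n. -/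
open Matrix BigOperators

/-- Least-squares fusion recovers the sum of local estimates: if ∑ G_i = I and
[I ⋯ I]·W = P·Gᵀ with W, P symmetric positive definite, then GᵀW⁻¹G = P⁻¹ and
x_ls = (GᵀW⁻¹G)⁻¹GᵀW⁻¹ζ = ∑ ζ_i. -/
theorem fusion_recovers_kalman
    {n m : ℕ}
    (G : Fin m → Matrix (Fin n) (Fin n) ℝ)
    (W : Matrix (Fin m × Fin n) (Fin m × Fin n) ℝ)
    (P : Matrix (Fin n) (Fin n) ℝ)
    (ζ : Fin m × Fin n → ℝ)
    (hGsum : ∑ i, G i = 1)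
    (hW : W.PosDef)
    (hP : P.PosDef)
    (E : Matrix (Fin n) (Fin m × Fin n) ℝ)
    (hE : E = Matrix.of fun a p => if a = p.2 then (1 : ℝ) else 0)
    (Gstack : Matrix (Fin m × Fin n) (Fin n) ℝ)
    (hGstack : Gstack = Matrix.of fun p b => G p.1 p.2 b)
    (hEW : E * W = P * Gstackᵀ) :
    Gstackᵀ * W⁻¹ * Gstack = P⁻¹ ∧
    ((Gstackᵀ * W⁻¹ * Gstack)⁻¹ * Gstackᵀ * W⁻¹).mulVec ζ = E.mulVec ζ ∧
    E.mulVec ζ = ∑ i : Fin m, (fun a => ζ (i, a)) := by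
  have hWdet : IsUnit W.det := isUnit_iff_ne_zero.mpr hW.det_pos.ne'
  have hPdet : IsUnit P.det := isUnit_iff_ne_zero.mpr hP.det_pos.ne'
  have hEG : E * Gstack = 1 := by
    ext a b
    simp only [hE, hGstack, mul_apply, Matrix.of_apply, Fintype.sum_prod_type,
      ite_mul, one_mul, zero_mul, Finset.sum_ite_eq, Finset.mem_univ, if_true]
    have := congrFun (congrFun hGsum a) b
    simpa [Matrix.sum_apply] using this
  have hE2 : E = P * Gstackᵀ * W⁻¹ := by
    calc E = E * W * W⁻¹ := by
            rw [Matrix.mul_assoc, Matrix.mul_nonsing_inv W hWdet, Matrix.mul_one]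
      _ = P * Gstackᵀ * W⁻¹ := by rw [hEW]
  have hPX : P * (Gstackᵀ * W⁻¹ * Gstack) = 1 := by
    calc P * (Gstackᵀ * W⁻¹ * Gstack) = (P * Gstackᵀ * W⁻¹) * Gstack := by
            simp only [Matrix.mul_assoc]
      _ = E * Gstack := by rw [← hE2]
      _ = 1 := hEG
  have h1 : Gstackᵀ * W⁻¹ * Gstack = P⁻¹ := (Matrix.inv_eq_right_inv hPX).symm
  refine ⟨h1, ?_, ?_⟩
  · rw [h1, Matrix.nonsing_inv_nonsing_inv P hPdet, ← hE2]
  · funext a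
    simp [hE, mulVec, dotProduct, Fintype.sum_prod_type]
end

section
/- Let θ ∈ ℝ^N, W̃ ∈ ℝ^{N×N} symmetric positive definite, H ∈ ℝ^{N×n} with full column rank and θᵀW̃⁻¹H = 0, and γ > 0. Consider the problem: minimize (1/2)·βᵀW̃⁻¹β + θᵀW̃⁻¹β + γ·‖ϑ‖₁ over (α, β, ϑ) subject to H·α + β + ϑ = 0. If γ > ‖W̃⁻¹θ‖_∞, then the unique minimizer is α = 0, β = 0, ϑ = 0. -/
open Matrix

/-!
Write `c = W̃⁻¹θ`. Since `W̃⁻¹` is symmetric and `Hᵀc = 0`, the constraint turns the linear term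
into `θᵀW̃⁻¹β = cᵀβ = -cᵀ(Hα + ϑ) = -cᵀϑ`, so the objective is
`(1/2)βᵀW̃⁻¹β + (γ‖ϑ‖₁ - cᵀϑ)`. The first summand is a positive definite form, and the second is
positive for `ϑ ≠ 0` because every `|cᵢ| < γ`. Hence the objective vanishes only at `β = ϑ = 0`,
and then `Hα = 0` forces `α = 0`.
-/

theorem Matrix.IsSymm.dotProduct_mulVec_comm {n R : Type*} [Fintype n] [CommSemiring R]
    {A : Matrix n n R} (hA : A.IsSymm) (v w : n → R) : v ⬝ᵥ A *ᵥ w = A *ᵥ v ⬝ᵥ w := by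
  rw [dotProduct_mulVec, ← mulVec_transpose, hA.eq]

section AbsBound

variable {ι R : Type*} [Fintype ι] [Ring R] [LinearOrder R]

theorem mul_le_mul_abs_of_abs_le [IsOrderedRing R] {c x γ : R} (hc : |c| ≤ γ) :
    c * x ≤ γ * |x| :=
  calc c * x ≤ |c| * |x| := (le_abs_self _).trans (abs_mul c x).le
    _ ≤ γ * |x| := mul_le_mul_of_nonneg_right hc (abs_nonneg x)

theorem dotProduct_le_mul_sum_abs [IsOrderedRing R] {c x : ι → R} {γ : R}
    (hc : ∀ i, |c i| ≤ γ) : c ⬝ᵥ x ≤ γ * ∑ i, |x i| := by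
  rw [dotProduct, Finset.mul_sum]
  exact Finset.sum_le_sum fun i _ => mul_le_mul_abs_of_abs_le (hc i)

theorem dotProduct_lt_mul_sum_abs [IsStrictOrderedRing R] {c x : ι → R} {γ : R}
    (hc : ∀ i, |c i| < γ) (hx : x ≠ 0) : c ⬝ᵥ x < γ * ∑ i, |x i| := by
  obtain ⟨j, hj⟩ := Function.ne_iff.mp hx
  have hstrict : c j * x j < γ * |x j| :=
    calc c j * x j ≤ |c j| * |x j| := (le_abs_self _).trans (abs_mul _ _).le
      _ < γ * |x j| := mul_lt_mul_of_pos_right (hc j) (abs_pos.mpr hj)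
  rw [dotProduct, Finset.mul_sum]
  exact Finset.sum_lt_sum (fun i _ => mul_le_mul_abs_of_abs_le (hc i).le)
    ⟨j, Finset.mem_univ j, hstrict⟩

end AbsBound

/-- ℓ¹-regularized fusion without attacks: if γ > ‖W̃⁻¹θ‖_∞ and θᵀW̃⁻¹H = 0, the
problem min (1/2)βᵀW̃⁻¹β + θᵀW̃⁻¹β + γ‖ϑ‖₁ s.t. Hα + β + ϑ = 0 has unique
minimizer (α, β, ϑ) = (0, 0, 0). -/
theorem l1_regularized_no_attack
    {N n : ℕ}
    (θ : Fin N → ℝ)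
    (Wt : Matrix (Fin N) (Fin N) ℝ)
    (H : Matrix (Fin N) (Fin n) ℝ)
    (γ : ℝ)
    (hWt : Wt.PosDef)
    (hH : Function.Injective H.mulVec)
    (hKKT : Hᵀ.mulVec (Wt⁻¹.mulVec θ) = 0)
    (hγ : ∀ i, |(Wt⁻¹.mulVec θ) i| < γ) :
    ∀ (α : Fin n → ℝ) (β ϑ : Fin N → ℝ),
      H.mulVec α + β + ϑ = 0 →
      (0 ≤ (1 / 2) * (β ⬝ᵥ Wt⁻¹.mulVec β) + θ ⬝ᵥ Wt⁻¹.mulVec β + γ * ∑ i, |ϑ i|) ∧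
      ((1 / 2) * (β ⬝ᵥ Wt⁻¹.mulVec β) + θ ⬝ᵥ Wt⁻¹.mulVec β + γ * ∑ i, |ϑ i| = 0 →
        α = 0 ∧ β = 0 ∧ ϑ = 0) := by
  intro α β ϑ hcon
  set c := Wt⁻¹ *ᵥ θ
  have hWinv : Wt⁻¹.PosDef := hWt.inv
  have hlin : θ ⬝ᵥ Wt⁻¹ *ᵥ β = -(c ⬝ᵥ ϑ) := by
    have hcH : c ⬝ᵥ H *ᵥ α = 0 := by
      rw [dotProduct_mulVec, ← mulVec_transpose, hKKT, zero_dotProduct]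
    have hβ : β = -(H *ᵥ α) - ϑ := by linear_combination hcon
    rw [(isHermitian_iff_isSymm.mp hWinv.isHermitian).dotProduct_mulVec_comm, hβ,
      dotProduct_sub, dotProduct_neg, hcH, neg_zero, zero_sub]
  have hquad : 0 ≤ β ⬝ᵥ Wt⁻¹ *ᵥ β := by simpa using hWinv.posSemidef.dotProduct_mulVec_nonneg β
  have hl1 : c ⬝ᵥ ϑ ≤ γ * ∑ i, |ϑ i| := dotProduct_le_mul_sum_abs fun i => (hγ i).le
  rw [hlin]
  refine ⟨by linarith, fun hzero => ?_⟩
  have hϑ : ϑ = 0 := by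
    by_contra hne
    linarith [dotProduct_lt_mul_sum_abs hγ hne]
  have hβ : β = 0 := by
    by_contra hne
    linarith [by simpa using hWinv.dotProduct_mulVec_pos hne]
  have hα : α = 0 := hH (by simpa [hβ, hϑ] using hcon)
  exact ⟨hα, hβ, hϑ⟩
end

section
/- Let D ∈ ℝ^{mn×mn} be the block matrix with n×n diagonal blocks D_{ii} = G_i + (m−1)·I_n and off-diagonal blocks D_{ij} = −I_n for i ≠ j, where each G_i is a diagonal matrix with nonnegative entries. Then D is symmetric positive semidefinite. If moreover for every diagonal position j ∈ {1,…,n} there exists i with the j-th diagonal entry of G_i strictly positive, then D is positive definite. -/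
open Matrix BigOperators

/-!
Grouping the coordinates by the state index `a`, `D` is block diagonal with blocks
`diag (G · a) + L`, where `L` is the Laplacian of the complete graph on `m` vertices
(diagonal entries `m - 1`, off-diagonal entries `-1`). The Laplacian's quadratic form
`∑_{i ~ j} (x i - x j)²` is nonnegative and vanishes only on vectors that are constant on
connected components; the diagonal part `∑ G i a * (x i)²` then forces such a constant to be
zero as soon as one `G i a` is positive.
-/

namespace Matrix

variable {m o R : Type*} [Fintype m] [Fintype o] [DecidableEq o]

theorem dotProduct_blockDiagonal_mulVec [Semiring R] [StarRing R]
    (M : o → Matrix m m R) (x : m × o → R) :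
    star x ⬝ᵥ (blockDiagonal M *ᵥ x) =
      ∑ k, star (fun i => x (i, k)) ⬝ᵥ (M k *ᵥ fun i => x (i, k)) := by
  simp only [dotProduct, mulVec, Fintype.sum_prod_type, blockDiagonal_apply, Finset.mul_sum]
  rw [Finset.sum_comm]
  simp [mul_ite]

variable [Ring R] [PartialOrder R] [StarRing R] {M : o → Matrix m m R}

theorem PosSemidef.blockDiagonal [AddLeftMono R] (hM : ∀ k, (M k).PosSemidef) :
    (blockDiagonal M).PosSemidef :=
  .of_dotProduct_mulVec_nonneg (isHermitian_blockDiagonal_iff.2 fun k => (hM k).isHermitian)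
    fun x => by
      rw [dotProduct_blockDiagonal_mulVec]
      exact Finset.sum_nonneg fun k _ => (hM k).dotProduct_mulVec_nonneg _

theorem PosDef.blockDiagonal [IsOrderedAddMonoid R] (hM : ∀ k, (M k).PosDef) :
    (blockDiagonal M).PosDef := by
  refine .of_dotProduct_mulVec_pos (isHermitian_blockDiagonal_iff.2 fun k => (hM k).isHermitian)
    fun x hx => ?_
  obtain ⟨⟨i, k⟩, hik⟩ := Function.ne_iff.1 hx
  rw [dotProduct_blockDiagonal_mulVec]
  refine Finset.sum_pos' (fun l _ => (hM l).posSemidef.dotProduct_mulVec_nonneg _)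
    ⟨k, Finset.mem_univ k, (hM k).dotProduct_mulVec_pos (Function.ne_iff.2 ⟨i, hik⟩)⟩

end Matrix

namespace SimpleGraph

variable {V : Type*} [Fintype V] [DecidableEq V]

theorem lapMatrix_top_apply {R : Type*} [AddGroupWithOne R] (i j : V) :
    (⊤ : SimpleGraph V).lapMatrix R i j = if i = j then (Fintype.card V : R) - 1 else -1 := by
  have : 1 ≤ Fintype.card V := Fintype.card_pos_iff.2 ⟨i⟩
  by_cases h : i = j <;> simp [lapMatrix, degMatrix, h, Nat.cast_sub this]

variable (G : SimpleGraph V) [DecidableRel G.Adj]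

theorem posDef_diagonal_add_lapMatrix {d : V → ℝ} (hd : 0 ≤ d)
    (hreach : ∀ j, ∃ i, 0 < d i ∧ G.Reachable i j) :
    (diagonal d + G.lapMatrix ℝ).PosDef := by
  have hdiag := PosSemidef.diagonal hd
  have hlap := G.posSemidef_lapMatrix ℝ
  refine .of_dotProduct_mulVec_pos (hdiag.add hlap).isHermitian fun x hx => ?_
  refine lt_of_le_of_ne ((hdiag.add hlap).dotProduct_mulVec_nonneg x) fun h0 => hx ?_
  rw [add_mulVec, dotProduct_add] at h0
  have hdiag_ker := (hdiag.dotProduct_mulVec_zero_iff x).1 <|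
    le_antisymm (by linarith [hlap.dotProduct_mulVec_nonneg x]) (hdiag.dotProduct_mulVec_nonneg x)
  have hlap_ker := (hlap.dotProduct_mulVec_zero_iff x).1 <|
    le_antisymm (by linarith [hdiag.dotProduct_mulVec_nonneg x]) (hlap.dotProduct_mulVec_nonneg x)
  funext j
  obtain ⟨i, hi, hij⟩ := hreach j
  have hxi : x i = 0 := by
    simpa [mulVec_diagonal, hi.ne'] using congrFun hdiag_ker i
  rw [← (G.lapMatrix_mulVec_eq_zero_iff_forall_reachable.1 hlap_ker) i j hij, hxi, Pi.zero_apply]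

end SimpleGraph

/-- The block matrix D with diagonal blocks G_i + (m−1)I and off-diagonal blocks
−I (G_i diagonal with nonnegative entries) is PSD; it is PD if for every state
coordinate some G_i has a strictly positive entry there. -/
theorem blockD_posdef
    {n m : ℕ}
    (G : Fin m → Fin n → ℝ)
    (hG : ∀ i a, 0 ≤ G i a)
    (D : Matrix (Fin m × Fin n) (Fin m × Fin n) ℝ)
    (hD : ∀ i j a b, D (i, a) (j, b) =
      if a = b then (if i = j then G i a + ((m : ℝ) - 1) else -1) else 0) :
    D.PosSemidef ∧ ((∀ a : Fin n, ∃ i : Fin m, 0 < G i a) → D.PosDef) := by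
  have hblock : D = blockDiagonal fun a =>
      diagonal (fun i => G i a) + (⊤ : SimpleGraph (Fin m)).lapMatrix ℝ := by
    ext ⟨i, a⟩ ⟨j, b⟩
    by_cases hab : a = b <;> by_cases hij : i = j <;>
      simp [hD, blockDiagonal_apply, SimpleGraph.lapMatrix_top_apply, hab, hij]
  subst hblock
  refine ⟨.blockDiagonal fun a => (PosSemidef.diagonal fun i => hG i a).add
    ((⊤ : SimpleGraph (Fin m)).posSemidef_lapMatrix ℝ), fun hpos => .blockDiagonal fun a => ?_⟩
  obtain ⟨i, hi⟩ := hpos a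
  exact SimpleGraph.posDef_diagonal_add_lapMatrix _ (fun i => hG i a)
    fun j => ⟨i, hi, SimpleGraph.reachable_top⟩
end
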